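/- Suppose the Dirichlet problem u''+a·u=σ, u(0)=u(T)=0 on [0,T] and the periodic problem on [0,2T] with potential ã (the even extension of a about t=T) are both uniquely solvable for every L¹ right-hand side, with Green's functions G_D and G_P. Then G_D(t,s) = G_P(t,s) − G_P(2T−t, s) for all (t,s) ∈ [0,T]×[0,T]. -/

import Mathlib

open Set MeasureTheory intervalIntegral

noncomputable def evenExt (T : ℝ) (f : ℝ → ℝ) : ℝ → ℝ :=
  fun t => if t ≤ T then f t else f (2 * T - t)

noncomputable def oddExt (T : ℝ) (f : ℝ → ℝ) : ℝ → ℝ :=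
  fun t => if t ≤ T then f t else -f (2 * T - t)

/-- `u` is a Carathéodory (W^{2,1}) solution of `u'' + a u = σ` on `[0, L]`:
`u` is `C¹` with derivative `u'`, and `u'` is absolutely continuous, being the
indefinite integral of `σ - a u` (so `u'' + a u = σ` a.e.). -/
def IsSolIcc (a σ : ℝ → ℝ) (L : ℝ) (u u' : ℝ → ℝ) : Prop :=
  (∀ t ∈ Icc (0:ℝ) L, HasDerivAt u (u' t) t) ∧
  (∀ t ∈ Icc (0:ℝ) L, u' t = u' 0 + ∫ s in (0:ℝ)..t, (σ s - a s * u s))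

def PeriodicBC (L : ℝ) : (ℝ → ℝ) → (ℝ → ℝ) → Prop :=
  fun u u' => u 0 = u L ∧ u' 0 = u' L

def AntiperiodicBC (L : ℝ) : (ℝ → ℝ) → (ℝ → ℝ) → Prop :=
  fun u u' => u 0 = -u L ∧ u' 0 = -u' L

def NeumannBC (L : ℝ) : (ℝ → ℝ) → (ℝ → ℝ) → Prop :=
  fun _ u' => u' 0 = 0 ∧ u' L = 0

def DirichletBC (L : ℝ) : (ℝ → ℝ) → (ℝ → ℝ) → Prop :=
  fun u _ => u 0 = 0 ∧ u L = 0

def Mixed1BC (L : ℝ) : (ℝ → ℝ) → (ℝ → ℝ) → Prop :=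
  fun u u' => u' 0 = 0 ∧ u L = 0

def Mixed2BC (L : ℝ) : (ℝ → ℝ) → (ℝ → ℝ) → Prop :=
  fun u u' => u 0 = 0 ∧ u' L = 0

/-- `G` is the Green's function of `u'' + a u = σ` on `[0, L]` with the boundary
conditions `BC`: for every integrable right-hand side `σ`, the function
`t ↦ ∫₀^L G(t,s) σ(s) ds` is a solution of the boundary value problem, and the
solution is unique (on `[0,L]`). -/
def IsGreen (a : ℝ → ℝ) (L : ℝ)
    (BC : (ℝ → ℝ) → (ℝ → ℝ) → Prop) (G : ℝ → ℝ → ℝ) : Prop :=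
  ∀ σ : ℝ → ℝ, IntervalIntegrable σ volume 0 L →
    (∃ w', IsSolIcc a σ L (fun t => ∫ s in (0:ℝ)..L, G t s * σ s) w' ∧
        BC (fun t => ∫ s in (0:ℝ)..L, G t s * σ s) w') ∧
    (∀ u₁ u₁' u₂ u₂', IsSolIcc a σ L u₁ u₁' → BC u₁ u₁' →
        IsSolIcc a σ L u₂ u₂' → BC u₂ u₂' → ∀ t ∈ Icc (0:ℝ) L, u₁ t = u₂ t)

/-- `lam` is an eigenvalue of `u'' + (a + lam) u = 0` on `[0, L]` with boundary
conditions `BC`: there is a nontrivial W^{2,1} solution. -/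
def IsEigen (a : ℝ → ℝ) (L : ℝ)
    (BC : (ℝ → ℝ) → (ℝ → ℝ) → Prop) (lam : ℝ) : Prop :=
  ∃ u u' : ℝ → ℝ, IsSolIcc (fun t => a t + lam) (fun _ => 0) L u u' ∧ BC u u' ∧
    ∃ t ∈ Icc (0:ℝ) L, u t ≠ 0


/-!
Extend `ρ ∈ L¹(0,T)` by zero to `ρ₀` on `[0,2T]` and let `w = G_P ρ₀`. Since `ã` is symmetric
about `T`, `t ↦ w(2T - t)` solves the same equation with right-hand side `ρ₀(2T - ·)`, so
`v(t) = w(t) - w(2T - t)` solves `u'' + ã u = ρ₀ - ρ₀(2T - ·)`, which is `ρ` on `[0,T)`; moreover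
`v(T) = 0` and `v(0) = w(0) - w(2T) = 0` by periodicity. Uniqueness for the Dirichlet problem
gives `G_D ρ = v` on `[0,T]`, i.e. the kernels `G_D(t,·)` and `G_P(t,·) - G_P(2T - t,·)` agree
when integrated against every `ρ`; being continuous, they coincide (test against their
difference).
-/

lemma eqOn_of_forall_integral_mul_eq {a b : ℝ} (hab : a < b) {f g : ℝ → ℝ}
    (hf : ContinuousOn f (Icc a b)) (hg : ContinuousOn g (Icc a b))
    (h : ∀ ρ : ℝ → ℝ, IntervalIntegrable ρ volume a b →
      ∫ x in a..b, f x * ρ x = ∫ x in a..b, g x * ρ x) :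
    EqOn f g (Icc a b) := by
  have hd : ContinuousOn (f - g) (Icc a b) := hf.sub hg
  have hdi : IntervalIntegrable (f - g) volume a b := hd.intervalIntegrable_of_Icc hab.le
  have hd' : ContinuousOn (f - g) (uIcc a b) := by rwa [uIcc_of_le hab.le]
  have hsq : ∫ x in a..b, (f - g) x * (f - g) x = 0 := calc
    _ = ∫ x in a..b, (f x * (f - g) x - g x * (f - g) x) := by
      congr 1 with x
      rw [Pi.sub_apply, sub_mul]
    _ = 0 := by
      rw [integral_sub (hdi.continuousOn_mul (by rwa [uIcc_of_le hab.le]))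
        (hdi.continuousOn_mul (by rwa [uIcc_of_le hab.le])), h _ hdi, sub_self]
  have hae : (f - g) * (f - g) =ᵐ[volume.restrict (Icc a b)] 0 := by
    rw [← Measure.restrict_congr_set Ioc_ae_eq_Icc]
    exact (integral_eq_zero_iff_of_le_of_nonneg_ae hab.le
      (ae_of_all _ fun x => mul_self_nonneg _) (hdi.continuousOn_mul hd')).1 hsq
  intro x hx
  have := Measure.eqOn_Icc_of_ae_eq volume hab.ne hae (hd.mul hd) continuousOn_const hx
  exact sub_eq_zero.1 (mul_self_eq_zero.1 this)

namespace IsSolIcc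

variable {A ρ u u' : ℝ → ℝ} {L : ℝ}

lemma continuousOn (h : IsSolIcc A ρ L u u') : ContinuousOn u (Icc 0 L) :=
  fun t ht => (h.1 t ht).continuousAt.continuousWithinAt

lemma intervalIntegrable_source (h : IsSolIcc A ρ L u u') (hL : 0 ≤ L)
    (hA : IntervalIntegrable A volume 0 L) (hρ : IntervalIntegrable ρ volume 0 L) :
    IntervalIntegrable (fun s => ρ s - A s * u s) volume 0 L :=
  hρ.sub (hA.mul_continuousOn (by rw [uIcc_of_le hL]; exact h.continuousOn))

lemma sub {ρ₂ u₂ u₂' : ℝ → ℝ} (h₁ : IsSolIcc A ρ L u u') (h₂ : IsSolIcc A ρ₂ L u₂ u₂')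
    (hL : 0 ≤ L) (hA : IntervalIntegrable A volume 0 L) (hρ : IntervalIntegrable ρ volume 0 L)
    (hρ₂ : IntervalIntegrable ρ₂ volume 0 L) :
    IsSolIcc A (ρ - ρ₂) L (u - u₂) (u' - u₂') := by
  refine ⟨fun t ht => (h₁.1 t ht).sub (h₂.1 t ht), fun t ht => ?_⟩
  have hsub : uIcc 0 t ⊆ uIcc 0 L := by
    rw [uIcc_of_le ht.1, uIcc_of_le hL]; exact Icc_subset_Icc_right ht.2
  have hsplit : ∫ s in (0:ℝ)..t, ((ρ - ρ₂) s - A s * (u - u₂) s) =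
      (∫ s in (0:ℝ)..t, (ρ s - A s * u s)) - ∫ s in (0:ℝ)..t, (ρ₂ s - A s * u₂ s) := by
    rw [← integral_sub ((h₁.intervalIntegrable_source hL hA hρ).mono_set hsub)
      ((h₂.intervalIntegrable_source hL hA hρ₂).mono_set hsub)]
    congr 1 with s
    simp only [Pi.sub_apply]
    ring
  simp only [Pi.sub_apply] at hsplit ⊢
  rw [hsplit, h₁.2 t ht, h₂.2 t ht]
  ring

lemma reflect (h : IsSolIcc A ρ L u u') (hL : 0 ≤ L) (hA : IntervalIntegrable A volume 0 L)
    (hρ : IntervalIntegrable ρ volume 0 L) (hAsymm : ∀ t, A (L - t) = A t) :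
    IsSolIcc A (fun s => ρ (L - s)) L (fun t => u (L - t)) (fun t => -u' (L - t)) := by
  have hmem : ∀ t ∈ Icc 0 L, L - t ∈ Icc 0 L :=
    fun t ht => ⟨by linarith [ht.2], by linarith [ht.1]⟩
  refine ⟨fun t ht => (h.1 (L - t) (hmem t ht)).comp_const_sub L t, fun t ht => ?_⟩
  have hg := h.intervalIntegrable_source hL hA hρ
  have hreflect : ∫ s in (0:ℝ)..t, (ρ (L - s) - A s * u (L - s)) =
      ∫ s in (L - t)..L, (ρ s - A s * u s) := by
    calc _ = ∫ s in (0:ℝ)..t, (fun s => ρ s - A s * u s) (L - s) := by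
          congr 1 with s
          beta_reduce
          rw [hAsymm]
      _ = _ := by simpa only [sub_zero] using
          integral_comp_sub_left (a := 0) (b := t) (fun s => ρ s - A s * u s) L
  have hLt : IntervalIntegrable (fun s => ρ s - A s * u s) volume 0 (L - t) :=
    hg.mono_set (by
      rw [uIcc_of_le (hmem t ht).1, uIcc_of_le hL]; exact Icc_subset_Icc_right (hmem t ht).2)
  beta_reduce
  rw [hreflect, sub_zero, ← integral_interval_sub_left hg hLt, h.2 L ⟨hL, le_rfl⟩,
    h.2 (L - t) (hmem t ht)]
  ring

lemma restrict {A' ρ' : ℝ → ℝ} {L' : ℝ} (h : IsSolIcc A ρ L u u') (hL' : L' ≤ L)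
    (hA : EqOn A A' (Ico 0 L')) (hρ : EqOn ρ ρ' (Ico 0 L')) : IsSolIcc A' ρ' L' u u' := by
  have hsub : Icc 0 L' ⊆ Icc 0 L := Icc_subset_Icc_right hL'
  refine ⟨fun t ht => h.1 t (hsub ht), fun t ht => ?_⟩
  rw [h.2 t (hsub ht)]
  congr 1
  refine integral_congr_ae ?_
  filter_upwards [volume.ae_ne L'] with s hs hst
  rw [uIoc_of_le ht.1] at hst
  have hs' : s ∈ Ico 0 L' := ⟨hst.1.le, lt_of_le_of_ne (hst.2.trans ht.2) hs⟩
  rw [hA hs', hρ hs']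

end IsSolIcc

section evenExt

variable {T : ℝ} {f : ℝ → ℝ}

lemma evenExt_of_le {t : ℝ} (ht : t ≤ T) : evenExt T f t = f t := if_pos ht

lemma evenExt_two_mul_sub (t : ℝ) : evenExt T f (2 * T - t) = evenExt T f t := by
  unfold evenExt
  split_ifs with h₁ h₂ h₂
  · rw [show t = T by linarith, show 2 * T - T = T by ring]
  · rfl
  · rw [sub_sub_cancel]
  · linarith

lemma intervalIntegrable_evenExt (hT : 0 ≤ T) (hf : IntervalIntegrable f volume 0 T) :
    IntervalIntegrable (evenExt T f) volume 0 (2 * T) := by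
  have hleft : IntervalIntegrable (evenExt T f) volume 0 T :=
    hf.congr fun t ht => (evenExt_of_le (by rw [uIoc_of_le hT] at ht; exact ht.2)).symm
  have hright : IntervalIntegrable (evenExt T f) volume T (2 * T) := by
    have h := (hf.comp_sub_left (2 * T)).symm
    rw [sub_zero, show 2 * T - T = T by ring] at h
    refine h.congr fun t ht => ?_
    rw [uIoc_of_le (by linarith)] at ht
    exact (if_neg (not_le.2 ht.1)).symm
  exact hleft.trans hright

end evenExt

lemma IntervalIntegrable.indicator_setOf_le {f : ℝ → ℝ} {a b c : ℝ}
    (hf : IntervalIntegrable f volume a c) (hab : a ≤ b) :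
    IntervalIntegrable ({x | x ≤ c}.indicator f) volume a b := by
  rw [intervalIntegrable_iff_integrableOn_Ioc_of_le hab]
  change IntegrableOn ((Iic c).indicator f) _ _
  rw [integrableOn_indicator_iff measurableSet_Iic]
  exact hf.1.mono_set fun x hx => ⟨hx.2.1, hx.1⟩

theorem integral_dirichletGreen_mul_eq_sub {T : ℝ} (hT : 0 < T) {a : ℝ → ℝ} {GD GP : ℝ → ℝ → ℝ}
    (ha : IntervalIntegrable a volume 0 T) (hGD : IsGreen a T (DirichletBC T) GD)
    (hGP : IsGreen (evenExt T a) (2 * T) (PeriodicBC (2 * T)) GP)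
    {ρ : ℝ → ℝ} (hρ : IntervalIntegrable ρ volume 0 T) {t : ℝ} (ht : t ∈ Icc 0 T) :
    ∫ x in (0:ℝ)..T, GD t x * ρ x =
      (∫ x in (0:ℝ)..T, GP t x * ρ x) - ∫ x in (0:ℝ)..T, GP (2 * T - t) x * ρ x := by
  have hT2 : 0 ≤ 2 * T := by linarith
  set ρ₀ := {x | x ≤ T}.indicator ρ
  have hρ₀ : IntervalIntegrable ρ₀ volume 0 (2 * T) := hρ.indicator_setOf_le hT2
  have hρ₀' : IntervalIntegrable (fun s => ρ₀ (2 * T - s)) volume 0 (2 * T) := by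
    simpa only [sub_zero, sub_self] using (hρ₀.comp_sub_left (2 * T)).symm
  have hA := intervalIntegrable_evenExt hT.le ha
  obtain ⟨w', hw, hwbc⟩ := (hGP ρ₀ hρ₀).1
  set w := fun r => ∫ x in (0:ℝ)..2 * T, GP r x * ρ₀ x
  have hv : IsSolIcc a ρ T (w - fun r => w (2 * T - r)) (w' - fun r => -w' (2 * T - r)) := by
    refine (hw.sub (hw.reflect hT2 hA hρ₀ evenExt_two_mul_sub) hT2 hA hρ₀ hρ₀').restrict
      (by linarith) (fun s hs => evenExt_of_le hs.2.le) fun s hs => ?_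
    have hs' : ¬ 2 * T - s ≤ T := by linarith [hs.2]
    simp [ρ₀, hs.2.le, hs']
  have hvbc : DirichletBC T (w - fun r => w (2 * T - r)) (w' - fun r => -w' (2 * T - r)) := by
    refine ⟨?_, ?_⟩ <;> simp only [Pi.sub_apply, sub_zero, sub_eq_zero]
    · exact hwbc.1
    · congr 1; ring
  obtain ⟨u', hu, hubc⟩ := (hGD ρ hρ).1
  rw [(hGD ρ hρ).2 _ _ _ _ hu hubc hv hvbc t ht]
  simp only [Pi.sub_apply, w, ρ₀, ← indicator_mul_right]
  rw [integral_indicator ⟨hT.le, by linarith⟩, integral_indicator ⟨hT.le, by linarith⟩]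

/-- `G_D(t,s) = G_P(t,s) − G_P(2T−t, s)` on `[0,T]²`, where `G_D` is
the Dirichlet Green's function on `[0,T]` and `G_P` the periodic one on `[0,2T]`
for the even-extended potential. -/
theorem statement6 (T : ℝ) (hT : 0 < T) (a : ℝ → ℝ) (GD GP : ℝ → ℝ → ℝ)
    (ha : IntervalIntegrable a volume 0 T)
    (hcD : ContinuousOn (fun p : ℝ × ℝ => GD p.1 p.2) (Icc (0:ℝ) T ×ˢ Icc (0:ℝ) T))
    (hcP : ContinuousOn (fun p : ℝ × ℝ => GP p.1 p.2)
      (Icc (0:ℝ) (2 * T) ×ˢ Icc (0:ℝ) (2 * T)))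
    (hGD : IsGreen a T (DirichletBC T) GD)
    (hGP : IsGreen (evenExt T a) (2 * T) (PeriodicBC (2 * T)) GP) :
    ∀ t ∈ Icc (0:ℝ) T, ∀ s ∈ Icc (0:ℝ) T,
      GD t s = GP t s - GP (2 * T - t) s := by
  intro t ht
  have htP : t ∈ Icc 0 (2 * T) := ⟨ht.1, by linarith [ht.2]⟩
  have htP' : 2 * T - t ∈ Icc 0 (2 * T) := ⟨by linarith [ht.2], by linarith [ht.1]⟩
  have hrow : ∀ r ∈ Icc 0 (2 * T), ContinuousOn (GP r) (Icc 0 T) := fun r hr =>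
    (hcP.uncurry_left r hr).mono (Icc_subset_Icc_right (by linarith))
  have hdiff := (hrow t htP).sub (hrow (2 * T - t) htP')
  refine eqOn_of_forall_integral_mul_eq hT (hcD.uncurry_left t ht) hdiff fun ρ hρ => ?_
  have hint : ∀ r ∈ Icc 0 (2 * T), IntervalIntegrable (fun x => GP r x * ρ x) volume 0 T :=
    fun r hr => hρ.continuousOn_mul (by rw [uIcc_of_le hT.le]; exact hrow r hr)
  rw [integral_dirichletGreen_mul_eq_sub hT ha hGD hGP hρ ht,
    ← integral_sub (hint t htP) (hint _ htP')]
  simp only [sub_mul]
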